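/- For all integers n ≥ k ≥ 0, U_r(n,k) = Σ_{l=k}^{n} C(n,l) · U(l,k) · r^{n-l}, where U(l,k) = U_0(l,k) is the central factorial number with even indices of the second kind. -/

import Mathlib

/-- `centralU r n k` is the r-central factorial number with even indices of the second kind. -/
def centralU (r : ℕ) : ℕ → ℕ → ℤ
  | 0, 0 => 1
  | 0, _ + 1 => 0
  | n + 1, 0 => (r : ℤ) ^ (n + 1)
  | n + 1, k + 1 => centralU r n k + (((k : ℤ) + 1) ^ 2 + r) * centralU r n (k + 1)

/-!
The recurrence says that the row `centralU r (n + 1)` is obtained from `centralU r n` by a linear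
operator `T_r = centralStep r` on integer sequences, so `centralU r n = T_r ^ n e₀`. Its diagonal
part is `k ↦ k² + r`, hence `T_r = T_0 + r • 1`; as `r • 1` is central, the binomial theorem
expands `T_r ^ n` as `∑ C(n, l) r^(n-l) T_0 ^ l`, and the terms with `l < k` vanish at index `k`.
-/

theorem centralU_eq_zero_of_lt (r : ℕ) {n k : ℕ} (h : n < k) : centralU r n k = 0 := by
  induction n generalizing k with
  | zero => obtain ⟨k, rfl⟩ := Nat.exists_eq_add_one_of_ne_zero (by omega : k ≠ 0); rfl
  | succ n ih =>
    obtain ⟨k, rfl⟩ := Nat.exists_eq_add_one_of_ne_zero (by omega : k ≠ 0)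
    rw [centralU, ih (by omega), ih (by omega), mul_zero, add_zero]

def centralStep (r : ℕ) : Module.End ℤ (ℕ → ℤ) where
  toFun v
    | 0 => r * v 0
    | k + 1 => v k + (((k : ℤ) + 1) ^ 2 + r) * v (k + 1)
  map_add' v w := by funext k; cases k <;> simp only [Pi.add_apply] <;> ring
  map_smul' c v := by
    funext k; cases k <;> simp only [Pi.smul_apply, smul_eq_mul, RingHom.id_apply] <;> ring

theorem centralStep_eq_centralStep_zero_add (r : ℕ) :
    centralStep r = centralStep 0 + (r : ℤ) • 1 := by
  ext v k
  cases k <;> simp [centralStep, add_mul, add_assoc]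

theorem centralStep_centralU (r n : ℕ) : centralStep r (centralU r n) = centralU r (n + 1) := by
  funext k
  cases k with
  | zero => cases n <;> simp [centralStep, centralU, pow_succ']
  | succ k => rfl

theorem centralU_eq_centralStep_pow_apply (r n : ℕ) :
    centralU r n = (centralStep r ^ n) (Pi.single 0 1) := by
  induction n with
  | zero => funext k; cases k <;> rfl
  | succ n ih => rw [pow_succ', Module.End.mul_apply, ← ih, centralStep_centralU]

theorem centralU_eq_sum_range (r n k : ℕ) :
    centralU r n k =
      ∑ l ∈ Finset.range (n + 1), (n.choose l : ℤ) * centralU 0 l k * (r : ℤ) ^ (n - l) := by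
  have hcomm : Commute (centralStep 0) ((r : ℤ) • 1) := (Commute.one_right _).smul_right _
  simp only [centralU_eq_centralStep_pow_apply, centralStep_eq_centralStep_zero_add r,
    hcomm.add_pow, LinearMap.sum_apply, Finset.sum_apply]
  refine Finset.sum_congr rfl fun l _ => ?_
  simp only [smul_pow, one_pow, Module.End.mul_apply, LinearMap.smul_apply, Module.End.one_apply,
    Module.End.natCast_apply, map_nsmul, map_zsmul]
  simp only [Pi.smul_apply, smul_eq_mul, nsmul_eq_mul]
  ring

theorem centralU_eq_sum_centralU_zero_general (r n k : ℕ) :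
    centralU r n k =
      ∑ l ∈ Finset.Icc k n, (n.choose l : ℤ) * centralU 0 l k * (r : ℤ) ^ (n - l) := by
  rw [centralU_eq_sum_range]
  refine (Finset.sum_subset (fun l hl => ?_) fun l hl hl' => ?_).symm
  · simp only [Finset.mem_Icc, Finset.mem_range] at hl ⊢; omega
  · simp only [Finset.mem_Icc, Finset.mem_range, not_and_or, not_le] at hl hl'
    rw [centralU_eq_zero_of_lt 0 (by omega), mul_zero, zero_mul]

theorem centralU_eq_sum_centralU_zero (r n k : ℕ) (h : k ≤ n) :
    centralU r n k =
      ∑ l ∈ Finset.Icc k n, (n.choose l : ℤ) * centralU 0 l k * (r : ℤ) ^ (n - l) :=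
  centralU_eq_sum_centralU_zero_general r n k
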